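/- Let p ≥ 1, c₂ > 0 and let c₁ be a constant with c₁ · √c₂ ≥ 4p, and let N ≥ 1 be an integer with N ≤ n / log(n). Then P( | n^{−1} Σ_{i=1}^n Σ_{ℓ=0}^{N−1} Σ_{k∈ℤ} ( ψ_{ℓ,k}(X_i) − E[ψ_{ℓ,k}(X_i)] ) | > c₁ · √(V_{2,ψ}(n, N)) ) ≤ 2 n^{−p}, where V_{2,ψ}(n, N) = c₂ · log(n) · (2A + 1)² · Φ₀² · 4^{N} / n. -/

import Mathlib

open MeasureTheory ProbabilityTheory Real

/-- The dilated-translated function `ψ_{ℓ,k}(x) = 2^{ℓ/2} ψ(2^ℓ x - k)`. -/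
noncomputable def waveletDil (ψ : ℝ → ℝ) (l : ℕ) (k : ℤ) (x : ℝ) : ℝ :=
  (2 : ℝ) ^ ((l : ℝ) / 2) * ψ ((2 : ℝ) ^ l * x - (k : ℝ))

/-!
Since `ψ` vanishes outside `[-A, A]`, for fixed `x` only the `2A + 1` indices `k` with
`|2^ℓ x - k| ≤ A` contribute to `∑_k ψ_{ℓ,k}(x)`. So this series is a measurable function
bounded by `(2A + 1) 2^{ℓ/2} Φ₀`, and the series of expectations is the expectation of the
series. The deviation is therefore `n⁻¹ ∑_i (g(X_i) - E g(X_i))` with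
`g = ∑_{ℓ<N} ∑_k ψ_{ℓ,k}` and `|g| ≤ R := (2A + 1) Φ₀ 2^N`. Hoeffding's inequality bounds its
tail at `t` by `2 exp(-n t² / (2R²))`, and at `t = c₁ √V` the exponent is
`c₁² c₂ log n / 2 ≥ p log n`.
-/

open scoped NNReal

theorem measureReal_le_abs_sum_sub_integral_le {Ω ι : Type*} [MeasurableSpace Ω]
    {P : Measure Ω} [IsProbabilityMeasure P] {Z : ι → Ω → ℝ} (h_indep : iIndepFun Z P)
    (hZ : ∀ i, Measurable (Z i)) {R : ℝ} (hR : ∀ i ω, |Z i ω| ≤ R) (s : Finset ι)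
    {ε : ℝ} (hε : 0 ≤ ε) :
    P.real {ω | ε ≤ |∑ i ∈ s, (Z i ω - ∫ ω', Z i ω' ∂P)|} ≤
      2 * exp (-ε ^ 2 / (2 * (s.card * R ^ 2))) := by
  set Y : ι → Ω → ℝ := fun i ω => Z i ω - ∫ ω', Z i ω' ∂P
  have hY_indep : iIndepFun Y P :=
    h_indep.comp (fun i x => x - ∫ ω', Z i ω' ∂P) fun _ => measurable_id.sub_const _
  have hY_subG : ∀ i, HasSubgaussianMGF (Y i) ((‖R - -R‖₊ / 2) ^ 2) P := fun i =>
    hasSubgaussianMGF_of_mem_Icc (hZ i).aemeasurable (ae_of_all _ fun ω => abs_le.mp (hR i ω))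
  have hparam : ((∑ i ∈ s, (‖R - -R‖₊ / 2) ^ 2 : ℝ≥0) : ℝ) = s.card * R ^ 2 := by
    have hR2 : ((‖R - -R‖₊ / 2) ^ 2 : ℝ≥0) = R ^ 2 := by simp [← two_mul]
    rw [Finset.sum_const, nsmul_eq_mul, NNReal.coe_mul, hR2, NNReal.coe_natCast]
  have hupper := HasSubgaussianMGF.measure_sum_ge_le_of_iIndepFun hY_indep (s := s)
    (fun i _ => hY_subG i) hε
  have hlower := HasSubgaussianMGF.measure_sum_ge_le_of_iIndepFun (X := fun i => -Y i)
    (hY_indep.comp (fun _ x => -x) fun _ => measurable_neg) (s := s)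
    (fun i _ => (hY_subG i).neg) hε
  rw [hparam] at hupper hlower
  calc P.real {ω | ε ≤ |∑ i ∈ s, Y i ω|}
      ≤ P.real ({ω | ε ≤ ∑ i ∈ s, Y i ω} ∪ {ω | ε ≤ ∑ i ∈ s, (-Y i) ω}) := by
        refine measureReal_mono fun ω hω => ?_
        simpa [le_abs, Finset.sum_neg_distrib] using hω
    _ ≤ _ := (measureReal_union_le _ _).trans (by linarith)

theorem hasSum_integral_of_tsum_abs_le {α ι : Type*} [MeasurableSpace α] [Countable ι]
    {μ : Measure α} [IsFiniteMeasure μ] {F : ι → α → ℝ} (hF : ∀ i, Measurable (F i))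
    (hF_sum : ∀ a, Summable fun i => F i a) {C : ℝ} (hC : ∀ a, ∑' i, |F i a| ≤ C) :
    HasSum (fun i => ∫ a, F i a ∂μ) (∫ a, ∑' i, F i a ∂μ) := by
  refine hasSum_integral_of_dominated_convergence (fun i a => ‖F i a‖)
    (fun i => (hF i).aestronglyMeasurable) (fun i => ae_of_all _ fun a => le_rfl)
    (ae_of_all _ fun a => (hF_sum a).norm) ?_ (ae_of_all _ fun a => (hF_sum a).hasSum)
  refine Integrable.of_bound (Measurable.tsum fun i => (hF i).norm).aestronglyMeasurable C
    (ae_of_all _ fun a => ?_)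
  rw [Real.norm_of_nonneg (tsum_nonneg fun i => norm_nonneg _)]
  exact hC a

theorem sum_range_two_rpow_half_le (N : ℕ) :
    ∑ l ∈ Finset.range N, (2 : ℝ) ^ ((l : ℝ) / 2) ≤ 2 ^ N :=
  calc ∑ l ∈ Finset.range N, (2 : ℝ) ^ ((l : ℝ) / 2)
      ≤ ∑ l ∈ Finset.range N, (2 : ℝ) ^ l := Finset.sum_le_sum fun l _ => by
        rw [← rpow_natCast]
        exact rpow_le_rpow_of_exponent_le one_le_two (by linarith [l.cast_nonneg (α := ℝ)])
    _ ≤ 2 ^ N := by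
        rw [geom_sum_eq (by norm_num : (2 : ℝ) ≠ 1)]
        norm_num

section Translates

variable {ψ : ℝ → ℝ} {A : ℕ}

theorem apply_sub_eq_zero_of_notMem_Icc_floor
    (hψ_supp : ∀ y, y ∉ Set.Icc (-(A : ℝ)) A → ψ y = 0) {y : ℝ} {k : ℤ}
    (hk : k ∉ Finset.Icc (⌊y⌋ - A) (⌊y⌋ + A)) : ψ (y - k) = 0 := by
  refine hψ_supp _ fun ⟨h₁, h₂⟩ => hk (Finset.mem_Icc.mpr ⟨?_, ?_⟩)
  · have : ⌊y⌋ - (A : ℤ) < k + 1 := by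
      rw [← Int.cast_lt (R := ℝ)]; push_cast; linarith [Int.floor_le y]
    omega
  · have : k < ⌊y⌋ + A + 1 := by
      rw [← Int.cast_lt (R := ℝ)]; push_cast; linarith [Int.lt_floor_add_one y]
    omega

theorem summable_apply_sub_int (hψ_supp : ∀ y, y ∉ Set.Icc (-(A : ℝ)) A → ψ y = 0)
    (y : ℝ) : Summable fun k : ℤ => ψ (y - k) :=
  summable_of_ne_finset_zero fun _ hk => apply_sub_eq_zero_of_notMem_Icc_floor hψ_supp hk

theorem tsum_abs_apply_sub_int_le (hψ_supp : ∀ y, y ∉ Set.Icc (-(A : ℝ)) A → ψ y = 0)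
    {Φ₀ : ℝ} (hψ_bdd : ∀ y, |ψ y| ≤ Φ₀) (y : ℝ) :
    ∑' k : ℤ, |ψ (y - k)| ≤ (2 * A + 1) * Φ₀ := by
  rw [tsum_eq_sum fun _ hk => by
    rw [apply_sub_eq_zero_of_notMem_Icc_floor hψ_supp hk, abs_zero]]
  refine (Finset.sum_le_card_nsmul _ _ _ fun _ _ => hψ_bdd _).trans_eq ?_
  rw [Int.card_Icc, nsmul_eq_mul, show ⌊y⌋ + A + 1 - (⌊y⌋ - A) = ((2 * A + 1 : ℕ) : ℤ) by
    push_cast; ring, Int.toNat_natCast]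
  push_cast; ring

end Translates

noncomputable def waveletSum (ψ : ℝ → ℝ) (N : ℕ) (x : ℝ) : ℝ :=
  ∑ l ∈ Finset.range N, ∑' k : ℤ, waveletDil ψ l k x

section Wavelets

variable {ψ : ℝ → ℝ} {A : ℕ}

theorem measurable_waveletDil (hψ : Measurable ψ) (l : ℕ) (k : ℤ) :
    Measurable (waveletDil ψ l k) :=
  (hψ.comp ((measurable_const_mul _).sub_const _)).const_mul _

theorem summable_waveletDil (hψ_supp : ∀ y, y ∉ Set.Icc (-(A : ℝ)) A → ψ y = 0) (l : ℕ)
    (x : ℝ) : Summable fun k : ℤ => waveletDil ψ l k x :=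
  (summable_apply_sub_int hψ_supp _).mul_left _

theorem tsum_abs_waveletDil_le (hψ_supp : ∀ y, y ∉ Set.Icc (-(A : ℝ)) A → ψ y = 0)
    {Φ₀ : ℝ} (hψ_bdd : ∀ y, |ψ y| ≤ Φ₀) (l : ℕ) (x : ℝ) :
    ∑' k : ℤ, |waveletDil ψ l k x| ≤ 2 ^ ((l : ℝ) / 2) * ((2 * A + 1) * Φ₀) := by
  have h2 : (0 : ℝ) < 2 ^ ((l : ℝ) / 2) := by positivity
  simp only [waveletDil, abs_mul, abs_of_pos h2]
  rw [tsum_mul_left]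
  exact mul_le_mul_of_nonneg_left (tsum_abs_apply_sub_int_le hψ_supp hψ_bdd _) (by positivity)

theorem abs_tsum_waveletDil_le (hψ_supp : ∀ y, y ∉ Set.Icc (-(A : ℝ)) A → ψ y = 0)
    {Φ₀ : ℝ} (hψ_bdd : ∀ y, |ψ y| ≤ Φ₀) (l : ℕ) (x : ℝ) :
    |∑' k : ℤ, waveletDil ψ l k x| ≤ 2 ^ ((l : ℝ) / 2) * ((2 * A + 1) * Φ₀) :=
  (norm_tsum_le_tsum_norm (summable_waveletDil hψ_supp l x).norm).trans
    (tsum_abs_waveletDil_le hψ_supp hψ_bdd l x)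

theorem measurable_waveletSum (hψ : Measurable ψ) (N : ℕ) : Measurable (waveletSum ψ N) :=
  Finset.measurable_sum _ fun l _ => Measurable.tsum (measurable_waveletDil hψ l)

theorem abs_waveletSum_le (hψ_supp : ∀ y, y ∉ Set.Icc (-(A : ℝ)) A → ψ y = 0) {Φ₀ : ℝ}
    (hψ_bdd : ∀ y, |ψ y| ≤ Φ₀) (N : ℕ) (x : ℝ) :
    |waveletSum ψ N x| ≤ (2 * A + 1) * Φ₀ * 2 ^ N := by
  have hΦ₀ : 0 ≤ Φ₀ := (abs_nonneg _).trans (hψ_bdd 0)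
  calc |waveletSum ψ N x|
      ≤ ∑ l ∈ Finset.range N, 2 ^ ((l : ℝ) / 2) * ((2 * A + 1) * Φ₀) :=
        (Finset.abs_sum_le_sum_abs _ _).trans
          (Finset.sum_le_sum fun l _ => abs_tsum_waveletDil_le hψ_supp hψ_bdd l x)
    _ ≤ (2 * A + 1) * Φ₀ * 2 ^ N := by
        rw [← Finset.sum_mul, mul_comm]
        exact mul_le_mul_of_nonneg_left (sum_range_two_rpow_half_le N) (by positivity)

theorem sum_tsum_waveletDil_sub_integral {Ω : Type*} [MeasurableSpace Ω] {P : Measure Ω}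
    [IsFiniteMeasure P] (hψ : Measurable ψ)
    (hψ_supp : ∀ y, y ∉ Set.Icc (-(A : ℝ)) A → ψ y = 0) {Φ₀ : ℝ} (hψ_bdd : ∀ y, |ψ y| ≤ Φ₀)
    {Y : Ω → ℝ} (hY : Measurable Y) (N : ℕ) (ω : Ω) :
    ∑ l ∈ Finset.range N,
        ∑' k : ℤ, (waveletDil ψ l k (Y ω) - ∫ ω', waveletDil ψ l k (Y ω') ∂P) =
      waveletSum ψ N (Y ω) - ∫ ω', waveletSum ψ N (Y ω') ∂P := by
  have hlevel (l : ℕ) :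
      ∑' k : ℤ, (waveletDil ψ l k (Y ω) - ∫ ω', waveletDil ψ l k (Y ω') ∂P) =
        ∑' k : ℤ, waveletDil ψ l k (Y ω) - ∫ ω', ∑' k : ℤ, waveletDil ψ l k (Y ω') ∂P :=
    ((summable_waveletDil hψ_supp l _).hasSum.sub (hasSum_integral_of_tsum_abs_le
      (fun k => (measurable_waveletDil hψ l k).comp hY)
      (fun _ => summable_waveletDil hψ_supp l _)
      (fun _ => tsum_abs_waveletDil_le hψ_supp hψ_bdd l _))).tsum_eq
  have hint (l : ℕ) : Integrable (fun ω' => ∑' k : ℤ, waveletDil ψ l k (Y ω')) P :=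
    Integrable.of_bound
      ((Measurable.tsum (measurable_waveletDil hψ l)).comp hY).aestronglyMeasurable _
      (ae_of_all _ fun _ => abs_tsum_waveletDil_le hψ_supp hψ_bdd l _)
  simp only [hlevel, Finset.sum_sub_distrib, waveletSum,
    integral_finsetSum _ fun l _ => hint l]

end Wavelets

theorem exp_neg_sq_div_le_rpow_neg {n p c₁ c₂ R : ℝ} (hn : 1 ≤ n) (hp : 1 ≤ p)
    (hc₂ : 0 < c₂) (hc₁ : 4 * p ≤ c₁ * √c₂) (hR : 0 < R) :
    exp (-(n * (c₁ * √(c₂ * log n * R ^ 2 / n))) ^ 2 / (2 * (n * R ^ 2))) ≤ n ^ (-p) := by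
  have hn₀ : 0 < n := by linarith
  have hlog : 0 ≤ log n := log_nonneg hn
  have hc : 16 * p ^ 2 ≤ c₁ ^ 2 * c₂ := by
    rw [← sq_sqrt hc₂.le, ← mul_pow, show 16 * p ^ 2 = (4 * p) ^ 2 by ring]
    exact pow_le_pow_left₀ (by linarith) hc₁ 2
  have hexponent : (n * (c₁ * √(c₂ * log n * R ^ 2 / n))) ^ 2 / (2 * (n * R ^ 2)) =
      c₁ ^ 2 * c₂ * log n / 2 := by
    rw [mul_pow, mul_pow, sq_sqrt (by positivity)]
    field_simp
  rw [rpow_def_of_pos hn₀, exp_le_exp, neg_div, hexponent]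
  have hp' : 2 * p ≤ 16 * p ^ 2 := by nlinarith
  nlinarith [mul_le_mul_of_nonneg_right (hp'.trans hc) hlog]

theorem stmt_6_general {Ω : Type*} [MeasurableSpace Ω] (P : Measure Ω) [IsProbabilityMeasure P]
    (A : ℕ) (Φ₀ : ℝ) (hΦ₀ : 0 < Φ₀)
    (ψ : ℝ → ℝ) (hψ_meas : Measurable ψ)
    (hψ_supp : ∀ y : ℝ, y ∉ Set.Icc (-(A : ℝ)) (A : ℝ) → ψ y = 0)
    (hψ_bdd : ∀ y : ℝ, |ψ y| ≤ Φ₀)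
    (n : ℕ) (hn : 1 ≤ n)
    (X : Fin n → Ω → ℝ) (hX_meas : ∀ i, Measurable (X i))
    (hX_indep : iIndepFun X P)
    (p c₁ c₂ : ℝ) (hp : 1 ≤ p) (hc₂ : 0 < c₂) (hc₁ : 4 * p ≤ c₁ * Real.sqrt c₂)
    (N : ℕ) :
    (P {ω | c₁ * Real.sqrt (c₂ * Real.log n * (2 * (A : ℝ) + 1) ^ 2 * Φ₀ ^ 2 * 4 ^ N / n) <
        |(n : ℝ)⁻¹ * ∑ i : Fin n, ∑ l ∈ Finset.range N,
          ∑' k : ℤ, (waveletDil ψ l k (X i ω) - ∫ ω', waveletDil ψ l k (X i ω') ∂P)|}).toReal ≤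
      2 * (n : ℝ) ^ (-p) := by
  set R := (2 * (A : ℝ) + 1) * Φ₀ * 2 ^ N
  set T := c₁ * √(c₂ * log n * (2 * (A : ℝ) + 1) ^ 2 * Φ₀ ^ 2 * 4 ^ N / n)
  have hT : T = c₁ * √(c₂ * log n * R ^ 2 / n) := by
    have h4 : (4 : ℝ) ^ N = (2 ^ N) ^ 2 := by rw [← pow_mul, mul_comm, pow_mul]; norm_num
    simp only [T, R, h4]
    ring_nf
  have hn₀ : (0 : ℝ) < n := by exact_mod_cast hn
  have hT₀ : 0 ≤ T := mul_nonneg (by nlinarith [sqrt_pos.2 hc₂]) (sqrt_nonneg _)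
  calc P.real _
      ≤ P.real {ω | n * T ≤
          |∑ i, (waveletSum ψ N (X i ω) - ∫ ω', waveletSum ψ N (X i ω') ∂P)|} := by
        refine measureReal_mono (Set.ofPred_subset_ofPred.2 fun ω hω => ?_)
        simp only [sum_tsum_waveletDil_sub_integral hψ_meas hψ_supp hψ_bdd (hX_meas _),
          inv_mul_eq_div, abs_div, Nat.abs_cast, lt_div_iff₀ hn₀] at hω
        linarith
    _ ≤ 2 * exp (-(n * T) ^ 2 / (2 * (n * R ^ 2))) := by
      simpa using measureReal_le_abs_sum_sub_integral_le
        (hX_indep.comp (fun _ => waveletSum ψ N) fun _ => measurable_waveletSum hψ_meas N)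
        (fun i => (measurable_waveletSum hψ_meas N).comp (hX_meas i))
        (fun i ω => abs_waveletSum_le hψ_supp hψ_bdd N (X i ω)) Finset.univ
        (mul_nonneg hn₀.le hT₀)
    _ ≤ 2 * (n : ℝ) ^ (-p) := by
      rw [hT]
      gcongr
      exact exp_neg_sq_div_le_rpow_neg (by exact_mod_cast hn) hp hc₂ hc₁ (by positivity)

/-- Concentration of the empirical detail-coefficient process.
`ψ` is a measurable function vanishing outside `[-A, A]` with `‖ψ‖_∞ ≤ Φ₀`,
`ψ_{ℓ,k}(x) = 2^{ℓ/2} ψ(2^ℓ x − k)`, and `X₁, …, X_n` are i.i.d. with common density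
`f ∈ L²(ℝ)`.  For `p ≥ 1`, `c₂ > 0`, `c₁ √c₂ ≥ 4p` and `1 ≤ N ≤ n / log(n)`, the
probability that
`|n⁻¹ ∑_{i=1}^n ∑_{ℓ=0}^{N−1} ∑_{k∈ℤ} (ψ_{ℓ,k}(X_i) − E[ψ_{ℓ,k}(X_i)])| > c₁ √(V_{2,ψ}(n,N))`
is at most `2 n^{-p}`, where `V_{2,ψ}(n,N) = c₂ log(n) (2A+1)² Φ₀² 4^N / n`. -/
theorem stmt_6 {Ω : Type*} [MeasurableSpace Ω] (P : Measure Ω) [IsProbabilityMeasure P]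
    (A : ℕ) (hA : 0 < A) (Φ₀ : ℝ) (hΦ₀ : 0 < Φ₀)
    (ψ : ℝ → ℝ) (hψ_meas : Measurable ψ)
    (hψ_supp : ∀ y : ℝ, y ∉ Set.Icc (-(A : ℝ)) (A : ℝ) → ψ y = 0)
    (hψ_bdd : ∀ y : ℝ, |ψ y| ≤ Φ₀)
    (n : ℕ) (hn : 1 ≤ n)
    (X : Fin n → Ω → ℝ) (hX_meas : ∀ i, Measurable (X i))
    (hX_indep : iIndepFun X P)
    (f : ℝ → ℝ) (hf_meas : Measurable f) (hf_L2 : MemLp f 2 volume)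
    (hX_law : ∀ i, P.map (X i) = volume.withDensity fun x => ENNReal.ofReal (f x))
    (p c₁ c₂ : ℝ) (hp : 1 ≤ p) (hc₂ : 0 < c₂) (hc₁ : 4 * p ≤ c₁ * Real.sqrt c₂)
    (N : ℕ) (hN : 1 ≤ N) (hNn : (N : ℝ) ≤ (n : ℝ) / Real.log n) :
    (P {ω | c₁ * Real.sqrt (c₂ * Real.log n * (2 * (A : ℝ) + 1) ^ 2 * Φ₀ ^ 2 * 4 ^ N / n) <
        |(n : ℝ)⁻¹ * ∑ i : Fin n, ∑ l ∈ Finset.range N,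
          ∑' k : ℤ, (waveletDil ψ l k (X i ω) - ∫ ω', waveletDil ψ l k (X i ω') ∂P)|}).toReal ≤
      2 * (n : ℝ) ^ (-p) :=
  stmt_6_general P A Φ₀ hΦ₀ ψ hψ_meas hψ_supp hψ_bdd n hn X hX_meas hX_indep p c₁ c₂ hp hc₂ hc₁ N
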